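/- arXiv:2007.00867 — 4 statements merged into one kernel-verified Lean document; each statement's English description precedes it below -/
import Mathlib

section
/- In SL(2,ℂ), if φ has order two (i.e., tr φ = 0) and g = φ f φ⁻¹ for some f, then tr[f,g] − 2 = (tr[f,φ] − 2)·((tr[f,φ] − 2) − (tr²f − 4)). -/
/-!
Fricke's identity `tr [A, B] = tr² A + tr² B + tr² (A B) - tr A tr B tr (A B) - 2` in `SL(2, R)`
expresses both commutator traces through `x = tr f` and `z = tr (f φ)`. Since `tr φ = 0`,
Cayley–Hamilton gives `φ⁻¹ = -φ`, so `tr (f g) = -tr ((f φ)²) = 2 - z²`, while `tr g = x`.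
Both sides of the identity then equal `z² (x² + z² - 4)`.
-/

open Matrix

namespace Matrix

variable {R : Type*} [CommRing R]

theorem trace_mul_mul_adjugate_mul_adjugate_fin_two (A B : Matrix (Fin 2) (Fin 2) R) :
    trace (A * B * adjugate A * adjugate B) =
      trace A ^ 2 * det B + trace B ^ 2 * det A + trace (A * B) ^ 2
        - trace A * trace B * trace (A * B) - 2 * det A * det B := by
  rw [eta_fin_two A, eta_fin_two B]
  simp only [adjugate_fin_two_of, mul_fin_two, trace_fin_two_of, det_fin_two_of]
  ring

theorem trace_mul_self_fin_two (A : Matrix (Fin 2) (Fin 2) R) :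
    trace (A * A) = trace A ^ 2 - 2 * det A := by
  simp only [trace_fin_two, det_fin_two, mul_apply, Fin.sum_univ_two]
  ring

theorem adjugate_fin_two_of_trace_eq_zero {A : Matrix (Fin 2) (Fin 2) R} (hA : trace A = 0) :
    adjugate A = -A := by
  have hd : A 1 1 = -A 0 0 := by rw [trace_fin_two] at hA; linear_combination hA
  ext i j
  fin_cases i <;> fin_cases j <;> simp [adjugate_fin_two, hd]

namespace SpecialLinearGroup

open scoped MatrixGroups

theorem trace_commutator_fin_two (A B : SL(2, R)) :
    trace (↑(A * B * A⁻¹ * B⁻¹) : Matrix (Fin 2) (Fin 2) R) =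
      trace (A : Matrix (Fin 2) (Fin 2) R) ^ 2 + trace (B : Matrix (Fin 2) (Fin 2) R) ^ 2
        + trace (↑(A * B) : Matrix (Fin 2) (Fin 2) R) ^ 2
        - trace (A : Matrix (Fin 2) (Fin 2) R) * trace (B : Matrix (Fin 2) (Fin 2) R)
          * trace (↑(A * B) : Matrix (Fin 2) (Fin 2) R) - 2 := by
  simp only [coe_mul, coe_inv, trace_mul_mul_adjugate_mul_adjugate_fin_two, det_coe]
  ring

theorem trace_mul_self_fin_two (A : SL(2, R)) :
    trace (↑(A * A) : Matrix (Fin 2) (Fin 2) R) = trace (A : Matrix (Fin 2) (Fin 2) R) ^ 2 - 2 := by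
  rw [coe_mul, Matrix.trace_mul_self_fin_two, det_coe, mul_one]

theorem trace_conj (A B : SL(2, R)) :
    trace (↑(A * B * A⁻¹) : Matrix (Fin 2) (Fin 2) R) = trace (B : Matrix (Fin 2) (Fin 2) R) := by
  rw [coe_mul, trace_mul_comm, ← coe_mul, inv_mul_cancel_left]

theorem coe_inv_eq_neg_of_trace_eq_zero {A : SL(2, R)}
    (hA : trace (A : Matrix (Fin 2) (Fin 2) R) = 0) : (↑A⁻¹ : Matrix (Fin 2) (Fin 2) R) = -↑A := by
  rw [coe_inv, adjugate_fin_two_of_trace_eq_zero hA]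

theorem trace_mul_conj_of_trace_eq_zero (A B : SL(2, R))
    (hB : trace (B : Matrix (Fin 2) (Fin 2) R) = 0) :
    trace (↑(A * (B * A * B⁻¹)) : Matrix (Fin 2) (Fin 2) R) =
      2 - trace (↑(A * B) : Matrix (Fin 2) (Fin 2) R) ^ 2 := by
  have h_eq : (↑(A * (B * A * B⁻¹)) : Matrix (Fin 2) (Fin 2) R) = -↑(A * B * (A * B)) := by
    simp only [coe_mul, coe_inv_eq_neg_of_trace_eq_zero hB, Matrix.mul_neg, Matrix.mul_assoc]
  rw [h_eq, trace_neg, trace_mul_self_fin_two]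
  ring

end SpecialLinearGroup

end Matrix

/-- in SL(2,ℂ), if tr φ = 0 and g = φ f φ⁻¹ then
γ(f,g) = γ(f,φ)(γ(f,φ) − β(f)), where γ(A,B) = tr[A,B] − 2 and β(A) = tr²A − 4. -/
theorem stmt2 (f φ g : Matrix.SpecialLinearGroup (Fin 2) ℂ)
    (hφ : Matrix.trace (φ : Matrix (Fin 2) (Fin 2) ℂ) = 0)
    (hg : g = φ * f * φ⁻¹) :
    Matrix.trace ((f * g * f⁻¹ * g⁻¹ : Matrix.SpecialLinearGroup (Fin 2) ℂ) :
        Matrix (Fin 2) (Fin 2) ℂ) - 2 =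
      (Matrix.trace ((f * φ * f⁻¹ * φ⁻¹ : Matrix.SpecialLinearGroup (Fin 2) ℂ) :
          Matrix (Fin 2) (Fin 2) ℂ) - 2) *
        ((Matrix.trace ((f * φ * f⁻¹ * φ⁻¹ : Matrix.SpecialLinearGroup (Fin 2) ℂ) :
            Matrix (Fin 2) (Fin 2) ℂ) - 2) -
          ((Matrix.trace ((f : Matrix.SpecialLinearGroup (Fin 2) ℂ) :
              Matrix (Fin 2) (Fin 2) ℂ)) ^ 2 - 4)) := by
  subst hg
  rw [Matrix.SpecialLinearGroup.trace_commutator_fin_two,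
    Matrix.SpecialLinearGroup.trace_commutator_fin_two, Matrix.SpecialLinearGroup.trace_conj,
    Matrix.SpecialLinearGroup.trace_mul_conj_of_trace_eq_zero f φ hφ, hφ]
  ring
end

section
/- The polynomial p(μ) = −μ²⁹ + 5μ²⁷ − 17μ²⁵ + 40μ²³ − 74μ²¹ + 111μ¹⁹ − 137μ¹⁷ + 144μ¹⁵ − 126μ¹³ + 94μ¹¹ − 58μ⁹ + 28μ⁷ − 12μ⁵ + 3μ³ − μ + 2 has a complex root z with 1.247 < |z| < 1.249. -/
/-!
Newton's method with a frozen derivative. At `c = 1.037906 + 0.692732 i` one has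
`‖p c‖ ≤ 2·10⁻⁵` and `‖p' c‖ ≥ 195`, while on `‖z‖ ≤ 5/4` the second derivative is bounded by
`1.1·10⁷` (the value at `5/4` of `p''` with absolute coefficients). Hence
`z ↦ z - p z / p' c` is a `1/2`-contraction of the closed ball of radius `5·10⁻⁶` about `c`, and
its fixed point is a root of `p`; finally `1.2478 ≤ ‖c‖ ≤ 1.2479`.
-/

/-- The Farey polynomial p_{23/29} as a function on ℂ. -/
noncomputable def p2329 (μ : ℂ) : ℂ :=
  -μ ^ 29 + 5 * μ ^ 27 - 17 * μ ^ 25 + 40 * μ ^ 23 - 74 * μ ^ 21 + 111 * μ ^ 19 -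
    137 * μ ^ 17 + 144 * μ ^ 15 - 126 * μ ^ 13 + 94 * μ ^ 11 - 58 * μ ^ 9 + 28 * μ ^ 7 -
    12 * μ ^ 5 + 3 * μ ^ 3 - μ + 2

open Metric Set

/-- `hornerDeriv k as z` is the `k`-th derivative at `z` of `∑ i, as[i] * X ^ i`, evaluated by
Horner's rule through `(a + X * g)⁽ᵏ⁺¹⁾ = (k + 1) * g⁽ᵏ⁾ + X * g⁽ᵏ⁺¹⁾`. -/
def hornerDeriv {R : Type*} [Semiring R] : ℕ → List R → R → R
  | _, [], _ => 0
  | 0, a :: as, z => a + z * hornerDeriv 0 as z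
  | k + 1, _ :: as, z => (k + 1) * hornerDeriv k as z + z * hornerDeriv (k + 1) as z

theorem hasDerivAt_hornerDeriv {𝕜 : Type*} [NontriviallyNormedField 𝕜] (k : ℕ) (as : List 𝕜)
    (z : 𝕜) : HasDerivAt (hornerDeriv k as) (hornerDeriv (k + 1) as z) z := by
  induction as generalizing k z with
  | nil =>
    have hnil : hornerDeriv k ([] : List 𝕜) = fun _ ↦ 0 := by funext; cases k <;> rfl
    rw [hnil]
    exact hasDerivAt_const z 0
  | cons a as ih =>
    cases k with
    | zero =>
      show HasDerivAt (fun y ↦ a + y * hornerDeriv 0 as y) _ z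
      refine (((hasDerivAt_id' z).mul (ih 0 z)).const_add a).congr_deriv ?_
      simp [hornerDeriv]
    | succ k =>
      show HasDerivAt (fun y ↦ (k + 1) * hornerDeriv k as y + y * hornerDeriv (k + 1) as y) _ z
      refine (((ih k z).const_mul _).add ((hasDerivAt_id' z).mul (ih (k + 1) z))).congr_deriv ?_
      simp only [hornerDeriv, Nat.cast_add, Nat.cast_one]
      ring

theorem norm_hornerDeriv_le {𝕜 : Type*} [NormedRing 𝕜] [NormOneClass 𝕜] (k : ℕ) (as : List 𝕜)
    {z : 𝕜} {R : ℝ} (hz : ‖z‖ ≤ R) :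
    ‖hornerDeriv k as z‖ ≤ hornerDeriv k (as.map (‖·‖)) R := by
  have hR : 0 ≤ R := (norm_nonneg z).trans hz
  induction as generalizing k with
  | nil => cases k <;> simp [hornerDeriv]
  | cons a as ih =>
    have hzmul : ∀ j, ‖z * hornerDeriv j as z‖ ≤ R * hornerDeriv j (as.map (‖·‖)) R := fun j ↦
      (norm_mul_le _ _).trans (mul_le_mul hz (ih j) (norm_nonneg _) hR)
    cases k with
    | zero => exact (norm_add_le _ _).trans (add_le_add le_rfl (hzmul 0))
    | succ k =>
      have hcast : ‖((k : 𝕜) + 1)‖ ≤ k + 1 := by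
        simpa using Nat.norm_cast_le (α := 𝕜) (k + 1)
      refine (norm_add_le _ _).trans (add_le_add ((norm_mul_le _ _).trans ?_) (hzmul (k + 1)))
      exact mul_le_mul hcast (ih k) (norm_nonneg _) (by positivity)

theorem exists_mem_closedBall_eq_zero_of_hasDerivAt {𝕜 : Type*} [RCLike 𝕜] {f f' : 𝕜 → 𝕜}
    {c : 𝕜} {r : ℝ} (hf : ∀ z ∈ closedBall c r, HasDerivAt f (f' z) z) (hc : f' c ≠ 0)
    (hf' : ∀ z ∈ closedBall c r, ‖f' z - f' c‖ ≤ ‖f' c‖ / 2) (hfc : 2 * ‖f c‖ ≤ ‖f' c‖ * r) :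
    ∃ z ∈ closedBall c r, f z = 0 := by
  set g : 𝕜 → 𝕜 := fun z ↦ z - f z / f' c
  have hc' : 0 < ‖f' c‖ := norm_pos_iff.2 hc
  have hr : 0 ≤ r := nonneg_of_mul_nonneg_right (by linarith [norm_nonneg (f c)]) hc'
  have hg_lip : LipschitzOnWith (1 / 2) g (closedBall c r) := by
    refine (convex_closedBall c r).lipschitzOnWith_of_nnnorm_hasDerivWithin_le
      (f' := fun z ↦ 1 - f' z / f' c)
      (fun z hz ↦ ((hasDerivAt_id z).sub ((hf z hz).div_const _)).hasDerivWithinAt) fun z hz ↦ ?_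
    rw [← NNReal.coe_le_coe, coe_nnnorm, one_sub_div hc, norm_div, norm_sub_rev,
      div_le_iff₀ hc']
    simpa [div_eq_inv_mul] using hf' z hz
  have hg_maps : MapsTo g (closedBall c r) (closedBall c r) := by
    intro z hz
    have hgc : dist (g c) c ≤ r / 2 := by
      rw [dist_eq_norm, show g c - c = -(f c / f' c) by simp [g], norm_neg, norm_div,
        div_le_iff₀ hc']
      linarith
    have hgz : dist (g z) (g c) ≤ r / 2 := by
      have hlip := hg_lip.dist_le_mul z hz c (mem_closedBall_self hr)
      rw [mem_closedBall] at hz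
      norm_num at hlip
      linarith
    exact mem_closedBall.2 ((dist_triangle _ _ _).trans (by linarith))
  obtain ⟨z, hz, hfix, -⟩ := ContractingWith.exists_fixedPoint' isClosed_closedBall.isComplete
    hg_maps ⟨by norm_num, hg_lip.mapsToRestrict hg_maps⟩ (mem_closedBall_self hr)
    (edist_ne_top _ _)
  refine ⟨z, hz, ?_⟩
  simpa [hc] using sub_eq_self.1 hfix

def p2329Coeffs : List ℂ :=
  [2, -1, 0, 3, 0, -12, 0, 28, 0, -58, 0, 94, 0, -126, 0, 144, 0, -137, 0, 111, 0, -74, 0, 40,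
    0, -17, 0, 5, 0, -1]

theorem p2329_eq_hornerDeriv : p2329 = hornerDeriv 0 p2329Coeffs := by
  funext z
  simp only [p2329, p2329Coeffs, hornerDeriv]
  ring

noncomputable def p2329Center : ℂ := ⟨1037906 / 1000000, 692732 / 1000000⟩

theorem norm_p2329_p2329Center_le : ‖p2329 p2329Center‖ ≤ 1 / 50000 := by
  rw [p2329_eq_hornerDeriv, Complex.norm_def, Real.sqrt_le_left (by norm_num),
    Complex.normSq_apply]
  simp only [hornerDeriv, p2329Coeffs, p2329Center]
  norm_num

theorem le_norm_hornerDeriv_one_p2329Center :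
    195 ≤ ‖hornerDeriv 1 p2329Coeffs p2329Center‖ := by
  rw [Complex.norm_def, Real.le_sqrt (by norm_num) (Complex.normSq_nonneg _),
    Complex.normSq_apply]
  simp only [hornerDeriv, p2329Coeffs, p2329Center]
  norm_num

theorem norm_p2329Center_mem_Icc : ‖p2329Center‖ ∈ Icc 1.2478 1.2479 := by
  rw [Complex.norm_def, mem_Icc, Real.le_sqrt (by norm_num) (Complex.normSq_nonneg _),
    Real.sqrt_le_left (by norm_num), Complex.normSq_apply]
  norm_num [p2329Center]

theorem hornerDeriv_two_p2329Coeffs_le :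
    hornerDeriv 2 (p2329Coeffs.map (‖·‖)) (5 / 4 : ℝ) ≤ 11000000 := by
  norm_num [hornerDeriv, p2329Coeffs]

theorem norm_le_of_mem_closedBall_p2329Center {z : ℂ}
    (hz : z ∈ closedBall p2329Center (1 / 200000)) : ‖z‖ ≤ 5 / 4 := by
  have := mem_closedBall_iff_norm.1 hz
  linarith [norm_le_insert' z p2329Center, norm_p2329Center_mem_Icc.2]

theorem norm_sub_hornerDeriv_one_p2329Center_le {z : ℂ}
    (hz : z ∈ closedBall p2329Center (1 / 200000)) :
    ‖hornerDeriv 1 p2329Coeffs z - hornerDeriv 1 p2329Coeffs p2329Center‖ ≤ 55 :=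
  calc _ ≤ 11000000 * ‖z - p2329Center‖ :=
        (convex_closedBall _ _).norm_image_sub_le_of_norm_hasDerivWithin_le
          (fun w _ ↦ (hasDerivAt_hornerDeriv 1 _ w).hasDerivWithinAt)
          (fun w hw ↦ (norm_hornerDeriv_le 2 _ (norm_le_of_mem_closedBall_p2329Center hw)).trans
            hornerDeriv_two_p2329Coeffs_le)
          (mem_closedBall_self (by norm_num)) hz
    _ ≤ 11000000 * (1 / 200000) := by gcongr; exact mem_closedBall_iff_norm.1 hz
    _ = 55 := by norm_num

theorem exists_p2329_eq_zero_mem_closedBall :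
    ∃ z ∈ closedBall p2329Center (1 / 200000), p2329 z = 0 := by
  have hderiv := le_norm_hornerDeriv_one_p2329Center
  have hval := norm_p2329_p2329Center_le
  rw [p2329_eq_hornerDeriv] at hval ⊢
  exact exists_mem_closedBall_eq_zero_of_hasDerivAt (fun z _ ↦ hasDerivAt_hornerDeriv 0 _ z)
    (norm_pos_iff.1 (by linarith))
    (fun z hz ↦ (norm_sub_hornerDeriv_one_p2329Center_le hz).trans (by linarith))
    (by nlinarith)

/-- p_{23/29} has a complex root z with 1.247 < |z| < 1.249. -/
theorem stmt10 : ∃ z : ℂ, p2329 z = 0 ∧ 1.247 < ‖z‖ ∧ ‖z‖ < 1.249 := by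
  obtain ⟨z, hz, hroot⟩ := exists_p2329_eq_zero_mem_closedBall
  have hdist := mem_closedBall_iff_norm.1 hz
  obtain ⟨hlo, hhi⟩ := norm_p2329Center_mem_Icc
  refine ⟨z, hroot, ?_, ?_⟩
  · linarith [norm_le_insert' p2329Center z, norm_sub_rev z p2329Center]
  · linarith [norm_le_insert' z p2329Center]
end

section
/- For all reals p, q with p, q ≥ 629, (1/2)·arccosh(5/(4 sin²(π/p) sin²(π/q))) − arccosh(1/(2 sin(π/p) sin(π/q))) < 1/2. -/
/-- arccosh(x) = log(x + √(x² − 1)). -/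
noncomputable def arccosh (x : ℝ) : ℝ := Real.log (x + Real.sqrt (x ^ 2 - 1))

/-!
With `B = 1 / (2 sin(π/p) sin(π/q)) ≥ 4` the left-hand side is `arccosh (5 B²) / 2 - arccosh B`.
Since `x ≤ x + √(x² - 1) ≤ 2x`, both terms are `log B` up to bounded errors, and the sharper
bound `√(B² - 1) ≥ B - 1/B` makes the difference at most `log (10 B²) / 2 - log (2B - 1/B)`,
which is below `1/2` because `10 < e (2 - 1/B²)²`.
-/

open Real

lemma arccosh_le_log_two_mul {x : ℝ} (hx : 0 < x) : arccosh x ≤ log (2 * x) := by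
  unfold arccosh
  apply log_le_log (by positivity)
  have : sqrt (x ^ 2 - 1) ≤ x := by
    calc sqrt (x ^ 2 - 1) ≤ sqrt (x ^ 2) := sqrt_le_sqrt (by linarith)
      _ = x := sqrt_sq hx.le
  linarith

lemma log_two_mul_sub_inv_le_arccosh {x : ℝ} (hx : 1 ≤ x) :
    log (2 * x - 1 / x) ≤ arccosh x := by
  have hx0 : 0 < x := by linarith
  have hinv : 1 / x ≤ 1 := by rw [div_le_one hx0]; exact hx
  have hmul : x * (1 / x) = 1 := by field_simp
  unfold arccosh
  apply log_le_log (by nlinarith)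
  have : x - 1 / x ≤ sqrt (x ^ 2 - 1) := by
    rw [← sqrt_sq (show 0 ≤ x - 1 / x by nlinarith)]
    exact sqrt_le_sqrt (by nlinarith)
  linarith

lemma half_arccosh_five_mul_sq_sub_arccosh_lt {B : ℝ} (hB : 4 ≤ B) :
    (1 / 2) * arccosh (5 * B ^ 2) - arccosh B < 1 / 2 := by
  have hB0 : 0 < B := by linarith
  have hmul : B * (1 / B) = 1 := by field_simp
  have hgap : 0 < 2 * B - 1 / B := by nlinarith
  have hupper := arccosh_le_log_two_mul (show 0 < 5 * B ^ 2 by positivity)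
  rw [show 2 * (5 * B ^ 2) = 10 * B ^ 2 by ring] at hupper
  have hlower := log_two_mul_sub_inv_le_arccosh (show 1 ≤ B by linarith)
  suffices log (10 * B ^ 2) < log (exp 1 * (2 * B - 1 / B) ^ 2) by
    rw [log_mul (exp_ne_zero 1) (by positivity), log_exp, log_pow] at this
    push_cast at this
    linarith
  apply log_lt_log (by positivity)
  have he : (2.7 : ℝ) < exp 1 := lt_trans (by norm_num) exp_one_gt_d9
  -- `(2B - 1/B)² ≥ 4B² - 4` and `2.7 (4B² - 4) ≥ 10 B²` once `B² ≥ 13.5`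
  nlinarith [mul_lt_mul_of_pos_right he (show 0 < (2 * B - 1 / B) ^ 2 by positivity),
    sq_nonneg (1 / B)]

lemma sin_pi_div_mem_Ioc {r : ℝ} (hr : 16 ≤ r) : sin (π / r) ∈ Set.Ioc 0 (1 / 4) := by
  have hr0 : 0 < r := by linarith
  have hle : π / r ≤ 1 / 4 := by
    rw [div_le_iff₀ hr0]; linarith [pi_lt_four]
  refine ⟨sin_pos_of_pos_of_lt_pi (by positivity) (by linarith [pi_gt_three]), ?_⟩
  exact (sin_le (by positivity)).trans hle

/-- for real p, q ≥ 629,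
(1/2)·arccosh(5/(4 sin²(π/p) sin²(π/q))) − arccosh(1/(2 sin(π/p) sin(π/q))) < 1/2. -/
theorem stmt13 (p q : ℝ) (hp : 629 ≤ p) (hq : 629 ≤ q) :
    (1 / 2) * arccosh (5 / (4 * Real.sin (Real.pi / p) ^ 2 * Real.sin (Real.pi / q) ^ 2)) -
      arccosh (1 / (2 * Real.sin (Real.pi / p) * Real.sin (Real.pi / q))) < 1 / 2 := by
  obtain ⟨hs0, hs⟩ := sin_pi_div_mem_Ioc (show 16 ≤ p by linarith)
  obtain ⟨ht0, ht⟩ := sin_pi_div_mem_Ioc (show 16 ≤ q by linarith)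
  set s := sin (π / p)
  set t := sin (π / q)
  have hB : 4 ≤ 1 / (2 * s * t) := by
    rw [le_div_iff₀ (by positivity)]
    nlinarith [mul_le_mul hs ht ht0.le (by norm_num)]
  have hsq : 5 / (4 * s ^ 2 * t ^ 2) = 5 * (1 / (2 * s * t)) ^ 2 := by
    field_simp
    ring
  rw [hsq]
  exact half_arccosh_five_mul_sq_sub_arccosh_lt hB
end

section
/- Let X = [[1,1],[0,1]] and Y = [[1,0],[μ,1]] in SL(2,ℂ[μ]) and let A = X Y X⁻¹ Y X Y⁻¹. Then tr(A) + 2 = (μ + 1)(μ² − 3μ + 4), and the roots of this polynomial are −1 and (3 ± i√7)/2, each of the latter having modulus exactly 2. -/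
/-!
The inverses of the unipotent generators are again unipotent, so tr(A) is a direct 2×2
computation. The quadratic factor μ² − 3μ + 4 has discriminant −7, so its roots are the conjugate
pair (3 ± i√7)/2, of norm √(9 + 7)/2 = 2.
-/

open Matrix

section Unipotent

variable {R : Type*} [CommRing R]

lemma inv_upperUnipotent (a : R) :
    (!![1, a; 0, 1] : Matrix (Fin 2) (Fin 2) R)⁻¹ = !![1, -a; 0, 1] :=
  inv_eq_right_inv (by simp [one_fin_two])

lemma inv_lowerUnipotent (a : R) :
    (!![1, 0; a, 1] : Matrix (Fin 2) (Fin 2) R)⁻¹ = !![1, 0; -a, 1] :=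
  inv_eq_right_inv (by simp [one_fin_two])

lemma trace_fareyWord_two_thirds_add_two (μ : R) :
    trace ((!![1, 1; 0, 1] : Matrix (Fin 2) (Fin 2) R) * !![1, 0; μ, 1] *
        (!![1, 1; 0, 1] : Matrix (Fin 2) (Fin 2) R)⁻¹ * !![1, 0; μ, 1] *
        !![1, 1; 0, 1] * (!![1, 0; μ, 1] : Matrix (Fin 2) (Fin 2) R)⁻¹) + 2 =
      (μ + 1) * (μ ^ 2 - 3 * μ + 4) := by
  rw [inv_upperUnipotent, inv_lowerUnipotent]
  simp [trace_fin_two]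
  ring

end Unipotent

lemma add_one_mul_quadratic_eq_zero_iff {K : Type*} [Field K] [NeZero (2 : K)] {s : K}
    (hs : s * s = -7) (z : K) :
    (z + 1) * (z ^ 2 - 3 * z + 4) = 0 ↔ z = -1 ∨ z = (3 + s) / 2 ∨ z = (3 - s) / 2 := by
  have hdiscrim : discrim 1 (-3) 4 = s * s := by rw [discrim, hs]; norm_num
  have hquad : z ^ 2 - 3 * z + 4 = 0 ↔ z = (3 + s) / 2 ∨ z = (3 - s) / 2 := by
    simpa [sq, sub_eq_add_neg] using quadratic_eq_zero_iff one_ne_zero hdiscrim z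
  rw [mul_eq_zero, add_eq_zero_iff_eq_neg, hquad]

lemma norm_three_add_I_mul_sqrt_seven_div_two :
    ‖(3 + Complex.I * Real.sqrt 7) / 2‖ = 2 := by
  rw [norm_div, mul_comm, ← Complex.ofReal_ofNat 3, Complex.norm_add_mul_I,
    Real.sq_sqrt (by norm_num)]
  norm_num

/-- for X = [[1,1],[0,1]], Y = [[1,0],[μ,1]] and the Farey word
A = X Y X⁻¹ Y X Y⁻¹, we have tr(A) + 2 = (μ + 1)(μ² − 3μ + 4); the roots of this cubic
are −1 and (3 ± i√7)/2, and the two complex roots have modulus exactly 2. -/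
theorem stmt19 :
    (∀ μ : ℂ,
      Matrix.trace
          ((!![1, 1; 0, 1] : Matrix (Fin 2) (Fin 2) ℂ) * !![1, 0; μ, 1] *
            (!![1, 1; 0, 1] : Matrix (Fin 2) (Fin 2) ℂ)⁻¹ * !![1, 0; μ, 1] *
            !![1, 1; 0, 1] * (!![1, 0; μ, 1] : Matrix (Fin 2) (Fin 2) ℂ)⁻¹) + 2 =
        (μ + 1) * (μ ^ 2 - 3 * μ + 4)) ∧
    (∀ z : ℂ, (z + 1) * (z ^ 2 - 3 * z + 4) = 0 ↔
      z = -1 ∨ z = (3 + Complex.I * Real.sqrt 7) / 2 ∨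
        z = (3 - Complex.I * Real.sqrt 7) / 2) ∧
    ‖(3 + Complex.I * Real.sqrt 7) / 2‖ = 2 ∧
    ‖(3 - Complex.I * Real.sqrt 7) / 2‖ = 2 := by
  have hsq : (Complex.I * Real.sqrt 7) * (Complex.I * Real.sqrt 7) = -7 := by
    rw [mul_mul_mul_comm, Complex.I_mul_I, ← Complex.ofReal_mul, Real.mul_self_sqrt (by norm_num)]
    norm_num
  have hconj : (3 - Complex.I * Real.sqrt 7) / 2 =
      starRingEnd ℂ ((3 + Complex.I * Real.sqrt 7) / 2) := by
    simp [map_div₀, sub_eq_add_neg, Complex.conj_ofNat]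
  refine ⟨trace_fareyWord_two_thirds_add_two, add_one_mul_quadratic_eq_zero_iff hsq,
    norm_three_add_I_mul_sqrt_seven_div_two, ?_⟩
  rw [hconj, Complex.norm_conj, norm_three_add_I_mul_sqrt_seven_div_two]
end
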